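/- Let n be an odd positive integer with n ≠ 1, 3, 7, and let q be a positive integer with 4q ≥ 3n + 2. Write n + 1 = (2a+1)·2^b with a, b nonnegative integers, and define the Radon–Hurwitz number ρ(n+1) = 2b+1 if b ≡ 0 mod 4, ρ(n+1) = 2b if b ≡ 1 or 2 mod 4, and ρ(n+1) = 2b+2 if b ≡ 3 mod 4. Then 2q − n ≥ ρ(n+1). -/
import Mathlib


/-- Radon–Hurwitz number of N = (2a+1)·2^b, expressed via the exponent b. -/
def rhoOf (b : Nat) : Nat :=
  if b % 4 = 0 then 2 * b + 1 else if b % 4 = 3 then 2 * b + 2 else 2 * b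

lemma pow_ge_aux : ∀ b : ℕ, 5 ≤ b → 4 * b + 2 ≤ 2 ^ b := by
  intro b hb
  induction b, hb using Nat.le_induction with
  | base => norm_num
  | succ k hk ih => rw [pow_succ]; omega

theorem stmt0 (n q a b : ℕ) (hn : 0 < n) (hodd : Odd n)
    (h1 : n ≠ 1) (h3 : n ≠ 3) (h7 : n ≠ 7) (hq : 0 < q)
    (hq2 : 4 * q ≥ 3 * n + 2) (hab : n + 1 = (2 * a + 1) * 2 ^ b) :
    2 * q - n ≥ rhoOf b := by
  obtain ⟨k, hk⟩ := hodd
  have hmain : n + 3 ≥ 2 * rhoOf b := by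
    unfold rhoOf
    rcases lt_or_ge b 5 with hb | hb
    · interval_cases b <;> simp_all <;> omega
    · have h1 : 4 * b + 2 ≤ 2 ^ b := pow_ge_aux b hb
      have h2 : 2 ^ b ≤ n + 1 := by
        calc 2 ^ b ≤ (2 * a + 1) * 2 ^ b := Nat.le_mul_of_pos_left _ (by omega)
        _ = n + 1 := hab.symm
      split <;> [omega; (split <;> omega)]
  omega
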